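/- arXiv:2310.07039 — 4 statements merged into one kernel-verified Lean document; each statement's English description precedes it below -/
import Mathlib

section
/- Let f : X → Y be Lipschitz with constant L* with respect to a metric ρ on X and the absolute-value metric on Y ⊆ ℝ. Let data points s_1,…,s_N ∈ X with noisy observations f̃_i = f(s_i) + e_i where |e_i| ≤ ē for all i, and let L ≥ L*. Define the Lipschitz interpolation predictor f̂(x) = ½ min_i (f̃_i + L·ρ(x, s_i)) + ½ max_i (f̃_i - L·ρ(x, s_i)). Then for every x ∈ X, |f̂(x) - f(x)| ≤ ē + L·min_i ρ(x, s_i) + (L* + L)/2 · min_i ρ(x, s_i). -/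
theorem stmt_2 {X : Type*} [MetricSpace X] (f : X → ℝ) (Lstar L ebar : ℝ)
    (hf : ∀ x x', |f x - f x'| ≤ Lstar * dist x x')
    (hLL : Lstar ≤ L) (hL0 : 0 ≤ Lstar)
    (N : ℕ) (s : Fin (N + 1) → X) (e : Fin (N + 1) → ℝ)
    (he : ∀ i, |e i| ≤ ebar)
    (ft : Fin (N + 1) → ℝ) (hft : ∀ i, ft i = f (s i) + e i) :
    ∀ x : X,
      |(1 / 2 * (Finset.univ.inf' Finset.univ_nonempty fun i => ft i + L * dist x (s i)) +
          1 / 2 * (Finset.univ.sup' Finset.univ_nonempty fun i => ft i - L * dist x (s i))) -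
        f x| ≤
        ebar + L * (Finset.univ.inf' Finset.univ_nonempty fun i => dist x (s i)) +
          (Lstar + L) / 2 * (Finset.univ.inf' Finset.univ_nonempty fun i => dist x (s i)) := by
  intro x
  obtain ⟨i0, -, hi0⟩ := Finset.exists_mem_eq_inf' (Finset.univ_nonempty)
    (fun i => dist x (s i))
  set D := Finset.univ.inf' Finset.univ_nonempty fun i => dist x (s i) with hD
  set A := Finset.univ.inf' Finset.univ_nonempty fun i => ft i + L * dist x (s i) with hA
  set B := Finset.univ.sup' Finset.univ_nonempty fun i => ft i - L * dist x (s i) with hB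
  have hD0 : 0 ≤ D := hi0 ▸ dist_nonneg
  have hlip : ∀ i, |f (s i) - f x| ≤ Lstar * dist x (s i) := by
    intro i
    have := hf (s i) x
    rwa [dist_comm] at this
  have habs : ∀ i, |f (s i) - f x| ≤ Lstar * dist x (s i) := hlip
  -- A upper bound
  have hAub : A ≤ f x + ebar + (Lstar + L) * D := by
    have h1 : A ≤ ft i0 + L * dist x (s i0) :=
      Finset.inf'_le _ (Finset.mem_univ i0)
    have h2 := abs_le.1 (habs i0)
    have h3 := abs_le.1 (he i0)
    rw [hft i0] at h1
    rw [← hi0] at h2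
    nlinarith [h2.2, h3.2]
  -- A lower bound
  have hAlb : f x - ebar ≤ A := by
    apply Finset.le_inf'
    intro i _
    have h2 := abs_le.1 (habs i)
    have h3 := abs_le.1 (he i)
    have h4 : Lstar * dist x (s i) ≤ L * dist x (s i) :=
      mul_le_mul_of_nonneg_right hLL dist_nonneg
    rw [hft i]
    linarith [h2.1, h3.1]
  -- B upper bound
  have hBub : B ≤ f x + ebar := by
    apply Finset.sup'_le
    intro i _
    have h2 := abs_le.1 (habs i)
    have h3 := abs_le.1 (he i)
    have h4 : Lstar * dist x (s i) ≤ L * dist x (s i) :=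
      mul_le_mul_of_nonneg_right hLL dist_nonneg
    rw [hft i]
    linarith [h2.2, h3.2]
  -- B lower bound
  have hBlb : f x - ebar - (Lstar + L) * D ≤ B := by
    have h1 : ft i0 - L * dist x (s i0) ≤ B :=
      Finset.le_sup' (fun i => ft i - L * dist x (s i)) (Finset.mem_univ i0)
    have h2 := abs_le.1 (habs i0)
    have h3 := abs_le.1 (he i0)
    rw [hft i0] at h1
    rw [← hi0] at h2
    nlinarith [h2.1, h3.1]
  have hLD : 0 ≤ L * D := mul_nonneg (hL0.trans hLL) hD0
  rw [abs_le]
  constructor <;> linarith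
end

section
/- Let f : X → ℝ be L*-Lipschitz on a metric space (X, ρ), with noisy samples f̃_i = f(s_i) + e_i, and L ≥ L*. For the Lipschitz interpolation predictor f̂(x) = ½ min_i (f̃_i + L·ρ(x,s_i)) + ½ max_i (f̃_i - L·ρ(x,s_i)), for every x, 2·|f̂(x) - f(x)| ≤ max{ max_i e_i + min_i (e_i + (L*+L)·ρ(x,s_i)), -min_i e_i - max_i (e_i - (L*+L)·ρ(x,s_i)) }. -/
theorem stmt_3 {X : Type*} [MetricSpace X] (f : X → ℝ) (Lstar L : ℝ)
    (hf : ∀ x x', |f x - f x'| ≤ Lstar * dist x x')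
    (hLL : Lstar ≤ L) (hL0 : 0 ≤ Lstar)
    (N : ℕ) (s : Fin (N + 1) → X) (e : Fin (N + 1) → ℝ)
    (ft : Fin (N + 1) → ℝ) (hft : ∀ i, ft i = f (s i) + e i) :
    ∀ x : X,
      2 * |(1 / 2 * (Finset.univ.inf' Finset.univ_nonempty fun i => ft i + L * dist x (s i)) +
          1 / 2 * (Finset.univ.sup' Finset.univ_nonempty fun i => ft i - L * dist x (s i))) -
        f x| ≤
        max
          ((Finset.univ.sup' Finset.univ_nonempty fun i => e i) +
            Finset.univ.inf' Finset.univ_nonempty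
              (fun i => e i + (Lstar + L) * dist x (s i)))
          (-(Finset.univ.inf' Finset.univ_nonempty fun i => e i) -
            Finset.univ.sup' Finset.univ_nonempty
              (fun i => e i - (Lstar + L) * dist x (s i))) := by
  intro x
  set m := Finset.univ.inf' Finset.univ_nonempty fun i => ft i + L * dist x (s i) with hm
  set M := Finset.univ.sup' Finset.univ_nonempty fun i => ft i - L * dist x (s i) with hM
  set Ie := Finset.univ.inf' Finset.univ_nonempty fun i => e i with hIe
  set Se := Finset.univ.sup' Finset.univ_nonempty fun i => e i with hSe
  set Ig := Finset.univ.inf' Finset.univ_nonempty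
      (fun i => e i + (Lstar + L) * dist x (s i)) with hIg
  set Sg := Finset.univ.sup' Finset.univ_nonempty
      (fun i => e i - (Lstar + L) * dist x (s i)) with hSg
  have hdd : ∀ j, |f (s j) - f x| ≤ Lstar * dist x (s j) := by
    intro j
    have := hf (s j) x
    rwa [dist_comm] at this
  have hLd : ∀ j, Lstar * dist x (s j) ≤ L * dist x (s j) := fun j =>
    mul_le_mul_of_nonneg_right hLL dist_nonneg
  -- upper bounds
  have hA1 : m - f x ≤ Ig := by
    rw [hIg]
    apply Finset.le_inf'
    intro j _
    have h1 : m ≤ ft j + L * dist x (s j) :=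
      Finset.inf'_le _ (Finset.mem_univ j)
    have h2 := abs_le.mp (hdd j)
    have h3 := hft j
    linarith [h2.2]
  have hA2 : M - f x ≤ Se := by
    have : M ≤ f x + Se := by
      rw [hM]
      apply Finset.sup'_le
      intro j _
      have h2 := abs_le.mp (hdd j)
      have h3 := hft j
      have h4 : e j ≤ Se := Finset.le_sup' _ (Finset.mem_univ j)
      have := hLd j
      linarith [h2.2]
    linarith
  -- lower bounds
  have hB1 : Ie ≤ m - f x := by
    have : Ie + f x ≤ m := by
      rw [hm]
      apply Finset.le_inf'
      intro j _
      have h2 := abs_le.mp (hdd j)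
      have h3 := hft j
      have h4 : Ie ≤ e j := Finset.inf'_le _ (Finset.mem_univ j)
      have := hLd j
      linarith [h2.1]
    linarith
  have hB2 : Sg ≤ M - f x := by
    have : Sg ≤ M - f x := by
      rw [hSg]
      apply Finset.sup'_le
      intro j _
      have h1 : ft j - L * dist x (s j) ≤ M := by
        rw [hM]; exact Finset.le_sup' (fun i => ft i - L * dist x (s i)) (Finset.mem_univ j)
      have h2 := abs_le.mp (hdd j)
      have h3 := hft j
      linarith [h2.1]
    exact this
  have hz : 2 * |1 / 2 * m + 1 / 2 * M - f x| = |m + M - 2 * f x| := by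
    rw [show m + M - 2 * f x = 2 * (1 / 2 * m + 1 / 2 * M - f x) by ring,
      abs_mul]
    simp [abs_of_nonneg]
  rw [hz]
  rcases le_or_gt 0 (m + M - 2 * f x) with h | h
  · rw [abs_of_nonneg h]
    exact le_max_of_le_left (by linarith)
  · rw [abs_of_neg h]
    exact le_max_of_le_right (by linarith)
end

section
/- Let f : X → ℝ be L*-Lipschitz on metric space (X, ρ), with samples f̃_i = f(s_i) + e_i and L ≥ L*. For any x ∈ X: min_i e_i ≤ min_i (f̃_i - f(x) + L·ρ(x, s_i)) ≤ min_i (e_i + (L*+L)·ρ(x, s_i)), and symmetrically max_i (e_i - (L*+L)·ρ(x, s_i)) ≤ max_i (f̃_i - f(x) - L·ρ(x, s_i)) ≤ max_i e_i. -/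
theorem stmt_4 {X : Type*} [MetricSpace X] (f : X → ℝ) (Lstar L : ℝ)
    (hf : ∀ x x', |f x - f x'| ≤ Lstar * dist x x')
    (hLL : Lstar ≤ L) (hL0 : 0 ≤ Lstar)
    (N : ℕ) (s : Fin (N + 1) → X) (e : Fin (N + 1) → ℝ)
    (ft : Fin (N + 1) → ℝ) (hft : ∀ i, ft i = f (s i) + e i) :
    ∀ x : X,
      ((Finset.univ.inf' Finset.univ_nonempty fun i => e i) ≤
          Finset.univ.inf' Finset.univ_nonempty
            (fun i => ft i - f x + L * dist x (s i)) ∧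
        Finset.univ.inf' Finset.univ_nonempty
            (fun i => ft i - f x + L * dist x (s i)) ≤
          Finset.univ.inf' Finset.univ_nonempty
            (fun i => e i + (Lstar + L) * dist x (s i))) ∧
      (Finset.univ.sup' Finset.univ_nonempty
          (fun i => e i - (Lstar + L) * dist x (s i)) ≤
          Finset.univ.sup' Finset.univ_nonempty
            (fun i => ft i - f x - L * dist x (s i)) ∧
        Finset.univ.sup' Finset.univ_nonempty
            (fun i => ft i - f x - L * dist x (s i)) ≤
          Finset.univ.sup' Finset.univ_nonempty fun i => e i) := by
  intro x
  have key : ∀ i : Fin (N + 1),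
      e i ≤ ft i - f x + L * dist x (s i) ∧
      ft i - f x + L * dist x (s i) ≤ e i + (Lstar + L) * dist x (s i) ∧
      e i - (Lstar + L) * dist x (s i) ≤ ft i - f x - L * dist x (s i) ∧
      ft i - f x - L * dist x (s i) ≤ e i := by
    intro i
    have h1 := hf (s i) x
    have h2 : |f (s i) - f x| ≤ Lstar * dist x (s i) := by
      rwa [dist_comm] at h1
    have h3 := abs_le.mp h2
    have hd : 0 ≤ dist x (s i) := dist_nonneg
    have hLd : Lstar * dist x (s i) ≤ L * dist x (s i) :=
      mul_le_mul_of_nonneg_right hLL hd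
    rw [hft i]
    constructor
    · nlinarith [h3.1]
    constructor
    · nlinarith [h3.2]
    constructor
    · nlinarith [h3.1]
    · nlinarith [h3.2]
  refine ⟨⟨?_, ?_⟩, ?_, ?_⟩
  · exact Finset.le_inf' _ _ fun i _ =>
      le_trans (Finset.inf'_le _ (Finset.mem_univ i)) (key i).1
  · exact Finset.le_inf' _ _ fun i _ =>
      le_trans (Finset.inf'_le _ (Finset.mem_univ i)) (key i).2.1
  · exact Finset.sup'_le _ _ fun i _ =>
      le_trans (key i).2.2.1 (Finset.le_sup' (fun j => ft j - f x - L * dist x (s j)) (Finset.mem_univ i))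
  · exact Finset.sup'_le _ _ fun i _ =>
      le_trans (key i).2.2.2 (Finset.le_sup' (fun j => e j) (Finset.mem_univ i))
end

section
/- Let f : X → ℝ be L*-Lipschitz on a bounded metric space (X, ρ) with data (s_i, f̃_i)_{i≤N}, and let L(n) ≥ 0 be any estimate of the Lipschitz constant. Denote by f̂_n the Lipschitz interpolation predictor with hyperparameter L(n) and f̂_n* the one with hyperparameter L*. Then sup_{x ∈ X} |f̂_n(x) - f̂_n*(x)| ≤ δ_ρ(X)·|L* - L(n)|, where δ_ρ(X) = sup_{x,y ∈ X} ρ(x,y) is the diameter of X. -/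
lemma aux_inf' {ι : Type*} [Fintype ι] [Nonempty ι] (g1 g2 : ι → ℝ) (D : ℝ)
    (h : ∀ i, |g1 i - g2 i| ≤ D) :
    |Finset.univ.inf' Finset.univ_nonempty g1 - Finset.univ.inf' Finset.univ_nonempty g2| ≤ D := by
  rw [abs_le]
  constructor
  · obtain ⟨i, -, hi⟩ := Finset.exists_mem_eq_inf' (Finset.univ_nonempty (α := ι)) g1
    have h1 : Finset.univ.inf' Finset.univ_nonempty g2 ≤ g2 i := Finset.inf'_le _ (Finset.mem_univ i)
    have h2 := (abs_le.mp (h i)).1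
    linarith
  · obtain ⟨i, -, hi⟩ := Finset.exists_mem_eq_inf' (Finset.univ_nonempty (α := ι)) g2
    have h1 : Finset.univ.inf' Finset.univ_nonempty g1 ≤ g1 i := Finset.inf'_le _ (Finset.mem_univ i)
    have h2 := (abs_le.mp (h i)).2
    linarith

lemma aux_sup' {ι : Type*} [Fintype ι] [Nonempty ι] (g1 g2 : ι → ℝ) (D : ℝ)
    (h : ∀ i, |g1 i - g2 i| ≤ D) :
    |Finset.univ.sup' Finset.univ_nonempty g1 - Finset.univ.sup' Finset.univ_nonempty g2| ≤ D := by
  rw [abs_le]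
  constructor
  · obtain ⟨i, -, hi⟩ := Finset.exists_mem_eq_sup' (Finset.univ_nonempty (α := ι)) g2
    have h1 : g1 i ≤ Finset.univ.sup' Finset.univ_nonempty g1 := Finset.le_sup' _ (Finset.mem_univ i)
    have h2 := (abs_le.mp (h i)).1
    linarith
  · obtain ⟨i, -, hi⟩ := Finset.exists_mem_eq_sup' (Finset.univ_nonempty (α := ι)) g1
    have h1 : g2 i ≤ Finset.univ.sup' Finset.univ_nonempty g2 := Finset.le_sup' _ (Finset.mem_univ i)
    have h2 := (abs_le.mp (h i)).2
    linarith

theorem stmt_16 {X : Type*} [MetricSpace X]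
    (hbdd : Bornology.IsBounded (Set.univ : Set X))
    (f : X → ℝ) (Lstar : ℝ) (hL0 : 0 ≤ Lstar)
    (hLip : ∀ x y, |f x - f y| ≤ Lstar * dist x y)
    (N : ℕ) (s : Fin (N + 1) → X) (ft : Fin (N + 1) → ℝ)
    (Ln : ℝ) (hLn : 0 ≤ Ln) :
    ∀ x : X,
      |(1 / 2 * Finset.univ.inf' Finset.univ_nonempty
            (fun i => ft i + Ln * dist x (s i)) +
          1 / 2 * Finset.univ.sup' Finset.univ_nonempty
            (fun i => ft i - Ln * dist x (s i))) -
        (1 / 2 * Finset.univ.inf' Finset.univ_nonempty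
            (fun i => ft i + Lstar * dist x (s i)) +
          1 / 2 * Finset.univ.sup' Finset.univ_nonempty
            (fun i => ft i - Lstar * dist x (s i)))| ≤
      Metric.diam (Set.univ : Set X) * |Lstar - Ln| := by
  intro x
  set D := Metric.diam (Set.univ : Set X) * |Lstar - Ln| with hD
  have hdiam : 0 ≤ Metric.diam (Set.univ : Set X) := Metric.diam_nonneg
  have key : ∀ i : Fin (N + 1), |Ln - Lstar| * dist x (s i) ≤ D := by
    intro i
    rw [hD, abs_sub_comm, mul_comm]
    exact mul_le_mul_of_nonneg_right
      (Metric.dist_le_diam_of_mem hbdd (Set.mem_univ x) (Set.mem_univ (s i))) (abs_nonneg _)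
  have h1 : |Finset.univ.inf' Finset.univ_nonempty (fun i => ft i + Ln * dist x (s i)) -
      Finset.univ.inf' Finset.univ_nonempty (fun i => ft i + Lstar * dist x (s i))| ≤ D := by
    apply aux_inf'
    intro i
    have : ft i + Ln * dist x (s i) - (ft i + Lstar * dist x (s i)) =
        (Ln - Lstar) * dist x (s i) := by ring
    rw [this, abs_mul, abs_of_nonneg dist_nonneg]
    exact key i
  have h2 : |Finset.univ.sup' Finset.univ_nonempty (fun i => ft i - Ln * dist x (s i)) -
      Finset.univ.sup' Finset.univ_nonempty (fun i => ft i - Lstar * dist x (s i))| ≤ D := by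
    apply aux_sup'
    intro i
    have : ft i - Ln * dist x (s i) - (ft i - Lstar * dist x (s i)) =
        -((Ln - Lstar) * dist x (s i)) := by ring
    rw [this, abs_neg, abs_mul, abs_of_nonneg dist_nonneg]
    exact key i
  have := abs_le.mp h1
  have := abs_le.mp h2
  rw [abs_le]
  constructor <;> nlinarith [abs_le.mp h1, abs_le.mp h2]
end
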